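/- Let f be a nonzero modular form of weight k for PSL₂(ℤ) with real Fourier coefficients. (1) Assume one of the following holds: (i) f is cuspidal and k ≡ 0 (mod 4); (ii) f is non-cuspidal, nonconstant, ε_f = −1 and k ≡ 0 (mod 4); (iii) f is non-cuspidal, nonconstant, ε_f = 1 and k ≡ 2 (mod 4). Then f has a critical point on the line {z ∈ ℍ : Re(z) = 1/2}, i.e. there exists y > 0 with f'(1/2 + iy) = 0. (2) Assume one of the following holds: (i) f is cuspidal and k ≡ 0 (mod 4); (iv) f is non-cuspidal, nonconstant, ε'_f = −1 and k ≡ 0 (mod 4); (v) f is non-cuspidal, nonconstant, ε'_f = 1 and k ≡ 2 (mod 4). Then f has a critical point on the line {z ∈ ℍ : Re(z) = 0}, i.e. there exists y > 0 with f'(iy) = 0. -/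

import Mathlib

open Filter Topology
open scoped Classical

noncomputable section

/-- `2πi` as a complex number. -/
def twoPiI : ℂ := 2 * Real.pi * Complex.I

/-- The upper half-plane, viewed as a subset of `ℂ`. -/
def UHP : Set ℂ := {z : ℂ | 0 < z.im}

/-- `f` is weakly modular of weight `k` for the full modular group `PSL₂(ℤ)`. -/
def IsWeaklyModular (k : ℤ) (f : ℂ → ℂ) : Prop :=
  ∀ a b c d : ℤ, a * d - b * c = 1 → ∀ z ∈ UHP,
    f (((a : ℂ) * z + b) / ((c : ℂ) * z + d)) = ((c : ℂ) * z + d) ^ k * f z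

/-- `f` has the `q`-expansion with coefficients `c` on the upper half-plane,
i.e. `f z = ∑_{n ≥ 0} c n * q^n` with `q = exp(2πiz)`. -/
def HasQExp (f : ℂ → ℂ) (c : ℕ → ℂ) : Prop :=
  ∀ z ∈ UHP, HasSum (fun n : ℕ => c n * Complex.exp (twoPiI * n * z)) (f z)

/-- A holomorphic modular form of weight `k` for `PSL₂(ℤ)` with `q`-expansion
coefficients `c`. -/
def IsModularForm (k : ℤ) (f : ℂ → ℂ) (c : ℕ → ℂ) : Prop :=
  DifferentiableOn ℂ f UHP ∧ IsWeaklyModular k f ∧ HasQExp f c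

/-- The divisor power sum `σ_j(n)` (equal to `0` for `n = 0`). -/
def sigmaC (j n : ℕ) : ℂ := ∑ d ∈ n.divisors, (d : ℂ) ^ j

/-- The normalized Eisenstein series `E_k = 1 - (2k/B_k) ∑ σ_{k-1}(n) qⁿ`
(with the conventions `E₀ = 1`). -/
def Ek (k : ℕ) : ℂ → ℂ := fun z =>
  1 - (2 * k / ((bernoulli k : ℚ) : ℂ)) *
    ∑' n : ℕ, sigmaC (k - 1) n * Complex.exp (twoPiI * n * z)

/-- The quasimodular Eisenstein series `E₂`. -/
def E2 : ℂ → ℂ := Ek 2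

/-- The normalized derivation `D = (2πi)⁻¹ d/dz = q d/dq`. -/
def Dop (f : ℂ → ℂ) : ℂ → ℂ := fun z => (twoPiI)⁻¹ * deriv f z

/-- The discriminant cusp form `Δ = q ∏ (1-qⁿ)²⁴`. -/
def Disc : ℂ → ℂ := fun z =>
  Complex.exp (twoPiI * z) * ∏' n : ℕ, (1 - Complex.exp (twoPiI * (n + 1) * z)) ^ 24

/-- The modular `j`-invariant `j = E₄³/Δ`. -/
def jfun : ℂ → ℂ := fun z => (Ek 4 z) ^ 3 / Disc z

/-- The filter of neighbourhoods of `i∞`, on `ℂ`. -/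
def atImInfty : Filter ℂ := Filter.comap Complex.im Filter.atTop

/-- The finite part of the standard fundamental domain `F` of `PSL₂(ℤ)`. -/
def Fdom : Set ℂ :=
  {z : ℂ | 0 < z.im ∧ -(1/2 : ℝ) < z.re ∧ z.re ≤ 1/2 ∧
    (z.re < 0 → 1 < ‖z‖) ∧ (0 ≤ z.re → 1 ≤ ‖z‖)}

/-- The finite part of the shifted fundamental domain `ℱ` of `PSL₂(ℤ)`. -/
def Fdom' : Set ℂ :=
  {z : ℂ | 0 < z.im ∧ 0 ≤ z.re ∧ z.re < 1 ∧
    (z.re ≤ 1/2 → 1 ≤ ‖z‖) ∧ (1/2 < z.re → 1 < ‖z - 1‖)}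

/-- `f` is a quasimodular form of weight `k` and depth at most `p` for `PSL₂(ℤ)`:
`f = ∑_{i ≤ p} f_i E₂^i` with `f_i` a modular form of weight `k - 2i`. -/
def IsQuasimodular (k : ℤ) (p : ℕ) (f : ℂ → ℂ) : Prop :=
  ∃ (g : ℕ → ℂ → ℂ) (c : ℕ → ℕ → ℂ),
    (∀ i ≤ p, IsModularForm (k - 2 * i) (g i) (c i)) ∧
    ∀ z ∈ UHP, f z = ∑ i ∈ Finset.range (p + 1), g i z * E2 z ^ i

/-- `f` is a quasimodular form of weight `k` and depth at most `p` all of whose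
Fourier coefficients are real (each component `f_i` has real coefficients). -/
def IsQuasimodularR (k : ℤ) (p : ℕ) (f : ℂ → ℂ) : Prop :=
  ∃ (g : ℕ → ℂ → ℂ) (c : ℕ → ℕ → ℝ),
    (∀ i ≤ p, IsModularForm (k - 2 * i) (g i) (fun n => ((c i n : ℝ) : ℂ))) ∧
    ∀ z ∈ UHP, f z = ∑ i ∈ Finset.range (p + 1), g i z * E2 z ^ i

/-- `f` is a quasimodular form of weight `k` and depth exactly `p`. -/
def IsQuasimodularDepth (k : ℤ) (p : ℕ) (f : ℂ → ℂ) : Prop :=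
  ∃ (g : ℕ → ℂ → ℂ) (c : ℕ → ℕ → ℂ),
    (∀ i ≤ p, IsModularForm (k - 2 * i) (g i) (c i)) ∧
    (∀ z ∈ UHP, f z = ∑ i ∈ Finset.range (p + 1), g i z * E2 z ^ i) ∧
    ∃ z ∈ UHP, g p z ≠ 0

/-- `ℓ = dim S_k`, i.e. `k = 12ℓ + k'` with `k' ∈ {0,4,6,8,10,14}`. -/
def ell (k : ℕ) : ℕ := if k % 12 = 2 then k / 12 - 1 else k / 12

/-- `k' ∈ {0,4,6,8,10,14}` with `k = 12ℓ + k'`. -/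
def kres (k : ℕ) : ℕ := k - 12 * ell k

/-- `z` and `w` are `PSL₂(ℤ)`-equivalent. -/
def ModEquiv (z w : ℂ) : Prop :=
  ∃ a b c d : ℤ, a * d - b * c = 1 ∧ ((a : ℂ) * z + b) / ((c : ℂ) * z + d) = w

/-- The ramification index `e_z`: `2` at points equivalent to `i`, `3` at points
equivalent to `ρ = e^{iπ/3}`, and `1` otherwise. -/
def eWeight (z : ℂ) : ℚ :=
  if ModEquiv z Complex.I then 2
  else if ModEquiv z (Complex.exp (Real.pi * Complex.I / 3)) then 3
  else 1

/-- The order of vanishing of `f` at `z` (junk value `0` if `f` vanishes to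
infinite order at `z`). -/
def zorder (f : ℂ → ℂ) (z : ℂ) : ℕ := sInf {n : ℕ | iteratedDeriv n f z ≠ 0}

/-- `f` is the basis element `f_{k,m}` of the space of weakly holomorphic modular
forms of weight `k`: it is weakly modular of weight `k`, holomorphic on `ℍ`, and has
`q`-expansion `q^{-m} + O(q^{ℓ+1})` with coefficients `c`. -/
def IsGapForm (k : ℕ) (m : ℤ) (f : ℂ → ℂ) (c : ℤ → ℂ) : Prop :=
  DifferentiableOn ℂ f UHP ∧ IsWeaklyModular k f ∧
  (∀ z ∈ UHP, HasSum (fun n : ℕ => c (-m + n) * Complex.exp (twoPiI * ((-m + n : ℤ) : ℂ) * z)) (f z)) ∧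
  c (-m) = 1 ∧ (∀ n : ℤ, -m < n → n ≤ (ell k : ℤ) → c n = 0)

/-- The kernel function `H₁(τ,z)` of Duke–Jenkins type, for weight `k` and index `m`. -/
def H1 (k : ℕ) (m : ℤ) (τ z : ℂ) : ℂ :=
  -(1 / twoPiI) * (Disc z ^ ell k / (Disc τ ^ ell k * Ek (kres k) τ)) *
    ((ell k : ℂ) * E2 z * Ek (kres k) z + Dop (Ek (kres k)) z) *
    (deriv jfun τ / (jfun τ - jfun z)) * Complex.exp (-(twoPiI * m * τ))

/-- The kernel function `H₂(τ,z)`, for weight `k` and index `m`. -/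
def H2 (k : ℕ) (m : ℤ) (τ z : ℂ) : ℂ :=
  (1 / (4 * (Real.pi : ℂ) ^ 2)) *
    (Disc z ^ ell k * Ek (kres k) z / (Disc τ ^ ell k * Ek (kres k) τ)) *
    (deriv jfun z * deriv jfun τ / (jfun τ - jfun z) ^ 2) * Complex.exp (-(twoPiI * m * τ))

/-- The kernel function `H(τ,z) = H₁(τ,z) + H₂(τ,z)`. -/
def Hfun (k : ℕ) (m : ℤ) (τ z : ℂ) : ℂ := H1 k m τ z + H2 k m τ z

end

/-!
Along the lines `Re z = 0` (parametrised by `i t`) and `Re z = 1/2` (by `1/2 + i t/2`) the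
variable `q` is real, so `f` restricts to a real function `U` of `t > 0`; the matrices `S` and
`(1 -1; 2 -1)` reverse these lines and give `U (1/t) = i^k t^k U t`. If `f'` had no zero on the
line, `U` would be strictly monotone by Darboux's theorem. As `t → ∞`, the `q`-expansion makes
`U` decay exponentially if `f` is cuspidal, and otherwise tend to the constant term from the
side given by the sign of the next nonzero coefficient. The functional equation transfers this
to `t → 0`, and under the sign conditions of the theorem the behaviour at the two ends
contradicts monotonicity.
-/

open Set

section PowerSeries

variable {r : ℕ → ℝ} {x₁ : ℝ}

lemma summable_abs_mul_pow_of_summable (h : Summable fun n => r n * x₁ ^ n) {x : ℝ}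
    (hx : 0 ≤ x) (hxx₁ : x < x₁) : Summable fun n => |r n| * x ^ n := by
  have hx₁ : 0 < x₁ := hx.trans_lt hxx₁
  obtain ⟨C, hC⟩ := h.tendsto_atTop_zero.abs.bddAbove_range
  refine Summable.of_nonneg_of_le (fun n => by positivity) (fun n => ?_)
    ((summable_geometric_of_lt_one (div_nonneg hx hx₁.le) ((div_lt_one hx₁).2 hxx₁)).mul_left C)
  calc |r n| * x ^ n = |r n * x₁ ^ n| * (x / x₁) ^ n := by
        rw [abs_mul, abs_of_pos (pow_pos hx₁ n), div_pow]; field_simp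
    _ ≤ C * (x / x₁) ^ n := by gcongr; exact hC ⟨n, rfl⟩

lemma tendsto_tsum_sub_sum_div_pow (h : Summable fun n => r n * x₁ ^ n) (hx₁ : 0 < x₁) (m : ℕ) :
    Tendsto (fun x => (∑' n, r n * x ^ n - ∑ n ∈ Finset.range m, r n * x ^ n) / x ^ m) (𝓝[>] 0)
      (𝓝 (r m)) := by
  set y := x₁ / 2
  have hy : 0 < y := half_pos hx₁
  have hbound : Summable fun n => |r (n + m)| * y ^ n := by
    have := ((summable_nat_add_iff m).2
      (summable_abs_mul_pow_of_summable h hy.le (half_lt_self hx₁))).div_const (y ^ m)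
    refine this.congr fun n => ?_
    rw [pow_add, ← mul_assoc, mul_div_cancel_right₀ _ (pow_ne_zero m hy.ne')]
  have hlim : Tendsto (fun x => ∑' n, r (n + m) * x ^ n) (𝓝[>] 0) (𝓝 (r m)) := by
    have := tendsto_tsum_of_dominated_convergence (𝓕 := 𝓝[>] (0 : ℝ))
      (f := fun x n => r (n + m) * x ^ n) (g := fun n => r (n + m) * 0 ^ n) hbound
      (fun n => (((continuous_pow n).tendsto 0).mono_left nhdsWithin_le_nhds).const_mul _) ?_
    · rwa [tsum_eq_single 0 (fun n hn => by simp [hn]), pow_zero, mul_one, zero_add] at this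
    · filter_upwards [Ioc_mem_nhdsGT hy] with x hx n
      rw [norm_mul, norm_pow, Real.norm_eq_abs, Real.norm_eq_abs, abs_of_pos hx.1]
      exact mul_le_mul_of_nonneg_left (pow_le_pow_left₀ hx.1.le hx.2 n) (abs_nonneg _)
  refine hlim.congr' ?_
  filter_upwards [Ioo_mem_nhdsGT hx₁] with x hx
  have hsum : Summable fun n => r n * x ^ n :=
    Summable.of_abs <| (summable_abs_mul_pow_of_summable h hx.1.le hx.2).congr fun n => by
      rw [abs_mul, abs_of_pos (pow_pos hx.1 n)]
  rw [← hsum.sum_add_tsum_nat_add m, add_sub_cancel_left, ← tsum_div_const]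
  refine tsum_congr fun n => ?_
  rw [pow_add, mul_div_assoc, mul_div_cancel_right₀ _ (pow_ne_zero m hx.1.ne')]

end PowerSeries

section ExpSeries

variable {r : ℕ → ℝ} {U : ℝ → ℝ} {a : ℝ}

lemma tendsto_exp_neg_mul_atTop_nhdsGT (ha : 0 < a) :
    Tendsto (fun t => Real.exp (-a * t)) atTop (𝓝[>] 0) :=
  Real.tendsto_exp_atBot_nhdsGT.comp (tendsto_id.const_mul_atTop_of_neg (neg_neg_of_pos ha))

lemma tendsto_sub_sum_div_exp_pow (ha : 0 < a)
    (hU : ∀ t > 0, HasSum (fun n => r n * Real.exp (-a * t) ^ n) (U t)) (m : ℕ) :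
    Tendsto (fun t => (U t - ∑ n ∈ Finset.range m, r n * Real.exp (-a * t) ^ n) /
      Real.exp (-a * t) ^ m) atTop (𝓝 (r m)) := by
  refine ((tendsto_tsum_sub_sum_div_pow (hU 1 one_pos).summable (Real.exp_pos _) m).comp
    (tendsto_exp_neg_mul_atTop_nhdsGT ha)).congr' ?_
  filter_upwards [eventually_gt_atTop 0] with t ht
  simp only [Function.comp_apply, (hU t ht).tsum_eq]

lemma tendsto_atTop_of_hasSum_exp (ha : 0 < a)
    (hU : ∀ t > 0, HasSum (fun n => r n * Real.exp (-a * t) ^ n) (U t)) :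
    Tendsto U atTop (𝓝 (r 0)) := by
  simpa using tendsto_sub_sum_div_exp_pow ha hU 0

lemma eventually_pos_mul_sub_of_hasSum_exp (ha : 0 < a)
    (hU : ∀ t > 0, HasSum (fun n => r n * Real.exp (-a * t) ^ n) (U t)) {n₀ : ℕ} (hn₀ : 0 < n₀)
    (hgap : ∀ i, 0 < i → i < n₀ → r i = 0) (hr : r n₀ ≠ 0) :
    ∀ᶠ t in atTop, 0 < r n₀ * (U t - r 0) := by
  have hsum (t : ℝ) : ∑ n ∈ Finset.range n₀, r n * Real.exp (-a * t) ^ n = r 0 := by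
    rw [Finset.sum_eq_single_of_mem 0 (Finset.mem_range.2 hn₀) fun i hi hi0 => by
      rw [hgap i (Nat.pos_of_ne_zero hi0) (Finset.mem_range.1 hi), zero_mul]]
    simp
  have hlim := (tendsto_sub_sum_div_exp_pow ha hU n₀).const_mul (r n₀)
  filter_upwards [hlim.eventually (eventually_gt_nhds (mul_self_pos.2 hr))] with t ht
  rw [hsum, ← mul_div_assoc] at ht
  exact (div_pos_iff_of_pos_right (pow_pos (Real.exp_pos _) _)).1 ht

lemma tendsto_pow_mul_of_hasSum_exp (ha : 0 < a)
    (hU : ∀ t > 0, HasSum (fun n => r n * Real.exp (-a * t) ^ n) (U t)) (hr : r 0 = 0) (k : ℕ) :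
    Tendsto (fun t => t ^ k * U t) atTop (𝓝 0) := by
  have hdecay : Tendsto (fun t : ℝ => t ^ k * Real.exp (-a * t)) atTop (𝓝 0) := by
    simpa only [Real.rpow_natCast] using tendsto_rpow_mul_exp_neg_mul_atTop_nhds_zero k a ha
  have hlim := hdecay.mul (tendsto_sub_sum_div_exp_pow ha hU 1)
  rw [zero_mul] at hlim
  refine hlim.congr fun t => ?_
  rw [Finset.sum_range_one, hr, pow_zero, mul_one, sub_zero, pow_one, mul_assoc,
    mul_div_cancel₀ _ (Real.exp_pos _).ne']

end ExpSeries

section Monotone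

variable {U : ℝ → ℝ} {L σ : ℝ} {k : ℕ}

lemma StrictMonoOn.lt_of_tendsto_atTop (hU : StrictMonoOn U (Ioi 0)) (hL : Tendsto U atTop (𝓝 L))
    {t : ℝ} (ht : 0 < t) : U t < L := by
  have ht1 : (0 : ℝ) < t + 1 := by linarith
  refine (hU ht ht1 (lt_add_one t)).trans_le (ge_of_tendsto hL ?_)
  filter_upwards [eventually_gt_atTop (t + 1)] with s hs
  exact (hU ht1 (ht1.trans hs) hs).le

lemma StrictMonoOn.apply_one_div_lt_apply_one (hU : StrictMonoOn U (Ioi 0)) {t : ℝ}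
    (ht : 1 < t) : U (1 / t) < U 1 :=
  hU (one_div_pos.2 (zero_lt_one.trans ht)) (mem_Ioi.2 one_pos)
    ((div_lt_one (zero_lt_one.trans ht)).2 ht)

lemma not_strictMonoOn_of_tendsto_zero (htop : Tendsto U atTop (𝓝 0))
    (hinv : Tendsto (fun t => U (1 / t)) atTop (𝓝 0)) : ¬StrictMonoOn U (Ioi 0) := by
  intro hU
  have h1 : U 1 < 0 := hU.lt_of_tendsto_atTop htop one_pos
  have : 0 ≤ U 1 := le_of_tendsto hinv
    ((eventually_gt_atTop 1).mono fun t ht => (hU.apply_one_div_lt_apply_one ht).le)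
  linarith

/-- As `t → ∞`, `U (1 / t) = t ^ k * (σ * U t) ≥ σ * U t → σ * L ≥ L > U 1`, whereas
monotonicity forces `U (1 / t) < U 1`. -/
lemma not_strictMonoOn_of_tendsto_of_eq_mul_pow (hσ : σ = 1 ∨ σ = -1)
    (hfe : ∀ t > 0, U (1 / t) = σ * t ^ k * U t) (htop : Tendsto U atTop (𝓝 L))
    (hσL : 0 < σ * L) : ¬StrictMonoOn U (Ioi 0) := by
  intro hU
  have hL : U 1 < σ * L :=
    (hU.lt_of_tendsto_atTop htop one_pos).trans_le (by rcases hσ with rfl | rfl <;> linarith)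
  have hσU := htop.const_mul σ
  obtain ⟨t, ht1, hσUt, hσUt'⟩ := ((eventually_gt_atTop 1).and
    ((hσU.eventually (eventually_gt_nhds hL)).and (hσU.eventually (eventually_gt_nhds hσL)))).exists
  have : σ * U t ≤ U (1 / t) := by
    rw [hfe t (zero_lt_one.trans ht1), mul_right_comm]
    exact le_mul_of_one_le_right hσUt'.le (one_le_pow₀ ht1.le)
  linarith [hU.apply_one_div_lt_apply_one ht1]

end Monotone

/-- With `σ = i ^ k` and `r` the coefficients of `f` in powers of `e^{-at}` along a line
(`rₙ = aₙ` on `Re z = 0`, `rₙ = (-1)ⁿ aₙ` on `Re z = 1/2`), the second alternative says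
`ε'_f = -σ`, resp. `ε_f = -σ`. -/
def CoeffSignCondition (σ : ℝ) (r : ℕ → ℝ) : Prop :=
  r 0 = 0 ∨ ∃ n₀, 0 < n₀ ∧ (∀ i, 0 < i → i < n₀ → r i = 0) ∧ σ * (r 0 * r n₀) < 0

lemma CoeffSignCondition.neg {σ : ℝ} {r : ℕ → ℝ} (h : CoeffSignCondition σ r) :
    CoeffSignCondition σ (-r) := by
  rcases h with h0 | ⟨n₀, hn₀, hgap, hsign⟩
  · exact Or.inl (by simp [h0])
  · exact Or.inr ⟨n₀, hn₀, fun i hi hin => by simp [hgap i hi hin], by simpa using hsign⟩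

lemma CoeffSignCondition.of_sign_eq {σ : ℝ} {r : ℕ → ℝ} {n₀ : ℕ} (hσ : σ = 1 ∨ σ = -1)
    (hn₀ : 0 < n₀) (hgap : ∀ i, 0 < i → i < n₀ → r i = 0)
    (hs : Real.sign (r 0 * r n₀) = -σ) : CoeffSignCondition σ r := by
  refine Or.inr ⟨n₀, hn₀, hgap, ?_⟩
  have hx : r 0 * r n₀ ≠ 0 := by
    intro h0
    rw [h0, Real.sign_zero] at hs
    rcases hσ with rfl | rfl <;> norm_num at hs
  rw [show σ = -Real.sign (r 0 * r n₀) by rw [hs, neg_neg], neg_mul]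
  exact neg_neg_of_pos (Real.sign_mul_pos_of_ne_zero _ hx)

section Restriction

variable {r : ℕ → ℝ} {U : ℝ → ℝ} {a σ : ℝ} {k : ℕ}

theorem not_strictMonoOn_of_hasSum_exp (ha : 0 < a)
    (hU : ∀ t > 0, HasSum (fun n => r n * Real.exp (-a * t) ^ n) (U t)) (hσ : σ = 1 ∨ σ = -1)
    (hfe : ∀ t > 0, U (1 / t) = σ * t ^ k * U t) (hr : CoeffSignCondition σ r) :
    ¬StrictMonoOn U (Ioi 0) := by
  have htop := tendsto_atTop_of_hasSum_exp ha hU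
  rcases hr with hr0 | ⟨n₀, hn₀, hgap, hsign⟩
  · refine not_strictMonoOn_of_tendsto_zero (hr0 ▸ htop) ?_
    have := (tendsto_pow_mul_of_hasSum_exp ha hU hr0 k).const_mul σ
    rw [mul_zero] at this
    refine this.congr' ?_
    filter_upwards [eventually_gt_atTop 0] with t ht
    rw [hfe t ht, mul_assoc]
  · intro hmono
    have hrn₀ : r n₀ ≠ 0 := by rintro h; simp [h] at hsign
    obtain ⟨t, hpos, ht⟩ := ((eventually_pos_mul_sub_of_hasSum_exp ha hU hn₀ hgap hrn₀).and
      (eventually_gt_atTop 0)).exists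
    have hlt : U t - r 0 < 0 := sub_neg.2 (hmono.lt_of_tendsto_atTop htop ht)
    have hd : r n₀ < 0 := neg_of_mul_pos_left hpos hlt.le
    exact not_strictMonoOn_of_tendsto_of_eq_mul_pow hσ hfe htop (by nlinarith) hmono

theorem not_strictAntiOn_of_hasSum_exp (ha : 0 < a)
    (hU : ∀ t > 0, HasSum (fun n => r n * Real.exp (-a * t) ^ n) (U t)) (hσ : σ = 1 ∨ σ = -1)
    (hfe : ∀ t > 0, U (1 / t) = σ * t ^ k * U t) (hr : CoeffSignCondition σ r) :
    ¬StrictAntiOn U (Ioi 0) := fun hanti =>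
  not_strictMonoOn_of_hasSum_exp (U := -U) (k := k) ha (fun t ht => by simpa using (hU t ht).neg)
    hσ (fun t ht => by simp only [Pi.neg_apply, hfe t ht, mul_neg]) hr.neg hanti.neg

end Restriction

lemma isOpen_UHP : IsOpen UHP := isOpen_lt continuous_const Complex.continuous_im

lemma strictMonoOn_or_strictAntiOn_of_hasDerivAt {U U' : ℝ → ℝ} {s : Set ℝ} (hs : Convex ℝ s)
    (hso : IsOpen s) (hU : ∀ t ∈ s, HasDerivAt U (U' t) t) (hU' : ∀ t ∈ s, U' t ≠ 0) :
    StrictMonoOn U s ∨ StrictAntiOn U s := by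
  have hcont : ContinuousOn U s := fun t ht => (hU t ht).continuousAt.continuousWithinAt
  have hwithin : ∀ t ∈ interior s, HasDerivWithinAt U (U' t) (interior s) t := by
    rw [hso.interior_eq]; exact fun t ht => (hU t ht).hasDerivWithinAt
  rcases hasDerivWithinAt_forall_lt_or_forall_gt_of_forall_ne hs
    (fun t ht => (hU t ht).hasDerivWithinAt) hU' with hneg | hpos
  · exact Or.inr (strictAntiOn_of_hasDerivWithinAt_neg hs hcont hwithin (by rwa [hso.interior_eq]))
  · exact Or.inl (strictMonoOn_of_hasDerivWithinAt_pos hs hcont hwithin (by rwa [hso.interior_eq]))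

lemma HasDerivAt.of_ofReal_comp {U : ℝ → ℝ} {e : ℂ} {t : ℝ}
    (h : HasDerivAt (fun x => (U x : ℂ)) e t) : HasDerivAt U e.re t ∧ (e.re : ℂ) = e := by
  have hre : HasDerivAt U e.re t := by
    simpa [Function.comp_def] using Complex.reCLM.hasFDerivAt.comp_hasDerivAt t h
  exact ⟨hre, hre.ofReal_comp.unique h⟩

lemma HasSum.of_ofReal {g : ℕ → ℝ} {z : ℂ} (h : HasSum (fun n => (g n : ℂ)) z) :
    HasSum g z.re ∧ (z.re : ℂ) = z := by
  have hre : HasSum g z.re := by simpa using Complex.hasSum_re h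
  exact ⟨hre, (Complex.hasSum_ofReal.2 hre).unique h⟩

theorem exists_deriv_eq_zero_of_ofReal_along {f : ℂ → ℂ} {s : Set ℂ} (hs : IsOpen s)
    (hf : DifferentiableOn ℂ f s) {ℓ ℓ' : ℝ → ℂ} (hℓ : ∀ t > 0, HasDerivAt ℓ (ℓ' t) t)
    (hℓ' : ∀ t > 0, ℓ' t ≠ 0) (hmaps : ∀ t > 0, ℓ t ∈ s) {U : ℝ → ℝ}
    (hU : ∀ t > 0, f (ℓ t) = U t) (hmono : ¬StrictMonoOn U (Ioi 0))
    (hanti : ¬StrictAntiOn U (Ioi 0)) : ∃ t > 0, deriv f (ℓ t) = 0 := by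
  by_contra! hcrit
  have hderiv (t : ℝ) (ht : t ∈ Ioi 0) :
      HasDerivAt U (deriv f (ℓ t) * ℓ' t).re t ∧ (deriv f (ℓ t) * ℓ' t).re ≠ 0 := by
    have hfℓ : HasDerivAt (fun x => f (ℓ x)) (deriv f (ℓ t) * ℓ' t) t :=
      (hf.differentiableAt (hs.mem_nhds (hmaps t ht))).hasDerivAt.comp t (hℓ t ht)
    obtain ⟨hUt, hreal⟩ := HasDerivAt.of_ofReal_comp <|
      hfℓ.congr_of_eventuallyEq <|
        (eventually_gt_nhds (show (0 : ℝ) < t from ht)).mono fun x hx => (hU x hx).symm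
    refine ⟨hUt, fun h0 => mul_ne_zero (hcrit t ht) (hℓ' t ht) ?_⟩
    rw [← hreal, h0, Complex.ofReal_zero]
  rcases strictMonoOn_or_strictAntiOn_of_hasDerivAt (convex_Ioi 0) isOpen_Ioi
    (fun t ht => (hderiv t ht).1) (fun t ht => (hderiv t ht).2) with h | h
  exacts [hmono h, hanti h]

theorem exists_deriv_eq_zero_of_hasQExp {k : ℕ} {f : ℂ → ℂ} {c : ℕ → ℝ}
    (hdiff : DifferentiableOn ℂ f UHP) (hqexp : HasQExp f fun n => (c n : ℂ))
    {ℓ : ℝ → ℂ} {w : ℂ} (hℓ : ∀ t > 0, HasDerivAt ℓ w t) (hw : w ≠ 0)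
    (hmaps : ∀ t > 0, ℓ t ∈ UHP) {a ε : ℝ} (ha : 0 < a)
    (hq : ∀ t > 0, Complex.exp (twoPiI * ℓ t) = ↑(ε * Real.exp (-a * t)))
    (hfe : ∀ t > 0, f (ℓ (1 / t)) = (t * Complex.I) ^ k * f (ℓ t)) {σ : ℝ}
    (hk : Complex.I ^ k = σ) (hσ : σ = 1 ∨ σ = -1)
    (hr : CoeffSignCondition σ fun n => ε ^ n * c n) : ∃ t > 0, deriv f (ℓ t) = 0 := by
  have hsum (t : ℝ) (ht : t > 0) :
      HasSum (fun n => ((ε ^ n * c n * Real.exp (-a * t) ^ n : ℝ) : ℂ)) (f (ℓ t)) := by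
    refine (hqexp _ (hmaps t ht)).congr_fun fun n => ?_
    have hexp : Complex.exp (twoPiI * n * ℓ t) = Complex.exp (twoPiI * ℓ t) ^ n := by
      rw [← Complex.exp_nat_mul]; ring_nf
    rw [hexp, hq t ht]
    push_cast
    ring
  set U : ℝ → ℝ := fun t => (f (ℓ t)).re
  have hfU (t : ℝ) (ht : t > 0) : f (ℓ t) = U t := (hsum t ht).of_ofReal.2.symm
  have hfeU (t : ℝ) (ht : t > 0) : U (1 / t) = σ * t ^ k * U t := by
    apply Complex.ofReal_injective
    rw [← hfU _ (one_div_pos.2 ht), hfe t ht, hfU t ht, mul_pow, hk]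
    push_cast
    ring
  have hU (t : ℝ) (ht : t > 0) :
      HasSum (fun n => ε ^ n * c n * Real.exp (-a * t) ^ n) (U t) := (hsum t ht).of_ofReal.1
  exact exists_deriv_eq_zero_of_ofReal_along isOpen_UHP hdiff (ℓ' := fun _ => w) hℓ
    (fun _ _ => hw) hmaps hfU (not_strictMonoOn_of_hasSum_exp ha hU hσ hfeU hr)
    (not_strictAntiOn_of_hasSum_exp ha hU hσ hfeU hr)

section Lines

open Complex

variable {k : ℕ} {f : ℂ → ℂ} {c : ℕ → ℝ} {σ : ℝ}

lemma IsWeaklyModular.apply_I_mul_one_div (hmod : IsWeaklyModular k f) {t : ℝ} (ht : 0 < t) :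
    f (I * ↑(1 / t)) = (t * I) ^ k * f (I * t) := by
  have h := hmod 0 (-1) 1 0 (by norm_num) (I * t) (by simpa [UHP] using ht)
  have ht' : (t : ℂ) ≠ 0 := ofReal_ne_zero.2 ht.ne'
  push_cast at h
  rw [zpow_natCast] at h
  convert h using 2
  · rw [eq_div_iff (by simp [ht', I_ne_zero])]
    push_cast
    field_simp
    linear_combination (t : ℂ) * I_sq
  · ring

lemma IsWeaklyModular.apply_half_add_I_mul_one_div (hmod : IsWeaklyModular k f) {t : ℝ}
    (ht : 0 < t) : f (1 / 2 + I * ↑(1 / t / 2)) = (t * I) ^ k * f (1 / 2 + I * ↑(t / 2)) := by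
  have h := hmod 1 (-1) 2 (-1) (by norm_num) (1 / 2 + I * ↑(t / 2)) (by simpa [UHP] using ht)
  have ht' : (t : ℂ) ≠ 0 := ofReal_ne_zero.2 ht.ne'
  push_cast at h ⊢
  rw [zpow_natCast] at h
  convert h using 2
  · rw [eq_div_iff (by ring_nf; simp [ht', I_ne_zero])]
    field_simp
    linear_combination (t : ℂ) * I_sq
  · ring

theorem IsModularForm.exists_deriv_eq_zero_on_imaginary_axis
    (hf : IsModularForm k f fun n => (c n : ℂ)) (hk : I ^ k = σ) (hσ : σ = 1 ∨ σ = -1)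
    (hr : CoeffSignCondition σ c) : ∃ y : ℝ, 0 < y ∧ deriv f (I * y) = 0 := by
  obtain ⟨hdiff, hmod, hqexp⟩ := hf
  have hq (t : ℝ) (_ : t > 0) :
      exp (twoPiI * (I * t)) = ↑(1 * Real.exp (-(2 * Real.pi) * t)) := by
    rw [one_mul, ofReal_exp, twoPiI]
    push_cast
    congr 1
    linear_combination (2 * Real.pi * t : ℂ) * I_sq
  exact exists_deriv_eq_zero_of_hasQExp hdiff hqexp (ℓ := fun t : ℝ => I * t)
    (fun t _ => by simpa using (hasDerivAt_id t).ofReal_comp.const_mul I) I_ne_zero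
    (fun t ht => by simpa [UHP] using ht) (by positivity) hq
    (fun t ht => hmod.apply_I_mul_one_div ht) hk hσ (by simpa using hr)

theorem IsModularForm.exists_deriv_eq_zero_on_re_eq_half
    (hf : IsModularForm k f fun n => (c n : ℂ)) (hk : I ^ k = σ) (hσ : σ = 1 ∨ σ = -1)
    (hr : CoeffSignCondition σ fun n => (-1) ^ n * c n) :
    ∃ y : ℝ, 0 < y ∧ deriv f (1 / 2 + I * y) = 0 := by
  obtain ⟨hdiff, hmod, hqexp⟩ := hf
  have hq (t : ℝ) (_ : t > 0) :
      exp (twoPiI * (1 / 2 + I * ↑(t / 2))) = ↑(-1 * Real.exp (-Real.pi * t)) := by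
    have : twoPiI * (1 / 2 + I * ↑(t / 2)) = Real.pi * I + ↑(-Real.pi * t) := by
      rw [twoPiI]
      push_cast
      linear_combination (Real.pi * t : ℂ) * I_sq
    rw [this, exp_add, exp_pi_mul_I]
    push_cast
    ring
  obtain ⟨t, ht, hcrit⟩ := exists_deriv_eq_zero_of_hasQExp hdiff hqexp
    (ℓ := fun t : ℝ => 1 / 2 + I * ↑(t / 2))
    (fun t _ => by simpa [div_eq_mul_inv] using
      (((hasDerivAt_id t).div_const 2).ofReal_comp.const_mul I).const_add (1 / 2 : ℂ))
    (div_ne_zero I_ne_zero two_ne_zero) (fun t ht => by simpa [UHP] using ht) Real.pi_pos hq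
    (fun t ht => hmod.apply_half_add_I_mul_one_div ht) hk hσ hr
  exact ⟨t / 2, half_pos ht, hcrit⟩

end Lines

lemma Real.sign_neg_one_pow_mul (n : ℕ) (x : ℝ) :
    Real.sign ((-1) ^ n * x) = (-1) ^ n * Real.sign x := by
  rcases n.even_or_odd with h | h <;> simp [h.neg_one_pow, Real.sign_neg]

theorem stmt12_general (k : ℕ) (f : ℂ → ℂ) (c : ℕ → ℝ)
    (hf : IsModularForm k f (fun n => ((c n : ℝ) : ℂ))) :
    -- case (i): `f` cuspidal, `k ≡ 0 (mod 4)`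
    ((c 0 = 0 ∧ k % 4 = 0) →
      (∃ y : ℝ, 0 < y ∧ deriv f ((1/2 : ℂ) + Complex.I * y) = 0) ∧
      (∃ y : ℝ, 0 < y ∧ deriv f (Complex.I * y) = 0)) ∧
    -- non-cuspidal, nonconstant cases
    (∀ n₀ : ℕ, 1 ≤ n₀ → c 0 ≠ 0 → c n₀ ≠ 0 → (∀ i, 1 ≤ i → i < n₀ → c i = 0) →
      -- case (ii): `ε_f = -1`, `k ≡ 0 (mod 4)`
      (((-1 : ℝ) ^ n₀ * Real.sign (c 0 * c n₀) = -1 ∧ k % 4 = 0 →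
        ∃ y : ℝ, 0 < y ∧ deriv f ((1/2 : ℂ) + Complex.I * y) = 0) ∧
      -- case (iii): `ε_f = 1`, `k ≡ 2 (mod 4)`
      ((-1 : ℝ) ^ n₀ * Real.sign (c 0 * c n₀) = 1 ∧ k % 4 = 2 →
        ∃ y : ℝ, 0 < y ∧ deriv f ((1/2 : ℂ) + Complex.I * y) = 0) ∧
      -- case (iv): `ε'_f = -1`, `k ≡ 0 (mod 4)`
      (Real.sign (c 0 * c n₀) = -1 ∧ k % 4 = 0 →
        ∃ y : ℝ, 0 < y ∧ deriv f (Complex.I * y) = 0) ∧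
      -- case (v): `ε'_f = 1`, `k ≡ 2 (mod 4)`
      (Real.sign (c 0 * c n₀) = 1 ∧ k % 4 = 2 →
        ∃ y : ℝ, 0 < y ∧ deriv f (Complex.I * y) = 0))) := by
  have hk0 (hk : k % 4 = 0) : Complex.I ^ k = ((1 : ℝ) : ℂ) := by
    rw [Complex.I_pow_eq_pow_mod, hk, pow_zero, Complex.ofReal_one]
  have hk2 (hk : k % 4 = 2) : Complex.I ^ k = ((-1 : ℝ) : ℂ) := by
    rw [Complex.I_pow_eq_pow_mod, hk, Complex.I_sq, Complex.ofReal_neg, Complex.ofReal_one]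
  refine ⟨fun ⟨hc0, hk⟩ => ⟨?_, ?_⟩, fun n₀ hn₀ _ _ hgap => ?_⟩
  · exact hf.exists_deriv_eq_zero_on_re_eq_half (hk0 hk) (.inl rfl) (.inl (by simp [hc0]))
  · exact hf.exists_deriv_eq_zero_on_imaginary_axis (hk0 hk) (.inl rfl) (.inl hc0)
  have hgap' : ∀ i, 1 ≤ i → i < n₀ → (-1) ^ i * c i = 0 := fun i hi hin => by
    rw [hgap i hi hin, mul_zero]
  have htwist : Real.sign ((-1) ^ 0 * c 0 * ((-1) ^ n₀ * c n₀)) =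
      (-1) ^ n₀ * Real.sign (c 0 * c n₀) := by
    rw [pow_zero, one_mul, mul_left_comm, Real.sign_neg_one_pow_mul]
  refine ⟨fun ⟨hs, hk⟩ => ?_, fun ⟨hs, hk⟩ => ?_, fun ⟨hs, hk⟩ => ?_, fun ⟨hs, hk⟩ => ?_⟩
  · exact hf.exists_deriv_eq_zero_on_re_eq_half (hk0 hk) (.inl rfl)
      (.of_sign_eq (.inl rfl) hn₀ hgap' (by rw [htwist, hs]))
  · exact hf.exists_deriv_eq_zero_on_re_eq_half (hk2 hk) (.inr rfl)
      (.of_sign_eq (.inr rfl) hn₀ hgap' (by rw [htwist, hs, neg_neg]))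
  · exact hf.exists_deriv_eq_zero_on_imaginary_axis (hk0 hk) (.inl rfl)
      (.of_sign_eq (.inl rfl) hn₀ hgap hs)
  · exact hf.exists_deriv_eq_zero_on_imaginary_axis (hk2 hk) (.inr rfl)
      (.of_sign_eq (.inr rfl) hn₀ hgap (by rw [hs, neg_neg]))

/-- Critical points of modular forms on the lines `Re z = 1/2` and
`Re z = 0`. Here, for a non-cuspidal nonconstant `f` with first two nonzero real Fourier
coefficients `c 0` and `c n₀`, one has `ε'_f = sign(c 0 · c n₀)` and
`ε_f = (-1)^{n₀} ε'_f`. -/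
theorem stmt12 (k : ℕ) (hke : Even k) (f : ℂ → ℂ) (c : ℕ → ℝ)
    (hf : IsModularForm k f (fun n => ((c n : ℝ) : ℂ))) (hne : ∃ n, c n ≠ 0) :
    -- case (i): `f` cuspidal, `k ≡ 0 (mod 4)`
    ((c 0 = 0 ∧ k % 4 = 0) →
      (∃ y : ℝ, 0 < y ∧ deriv f ((1/2 : ℂ) + Complex.I * y) = 0) ∧
      (∃ y : ℝ, 0 < y ∧ deriv f (Complex.I * y) = 0)) ∧
    -- non-cuspidal, nonconstant cases
    (∀ n₀ : ℕ, 1 ≤ n₀ → c 0 ≠ 0 → c n₀ ≠ 0 → (∀ i, 1 ≤ i → i < n₀ → c i = 0) →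
      -- case (ii): `ε_f = -1`, `k ≡ 0 (mod 4)`
      (((-1 : ℝ) ^ n₀ * Real.sign (c 0 * c n₀) = -1 ∧ k % 4 = 0 →
        ∃ y : ℝ, 0 < y ∧ deriv f ((1/2 : ℂ) + Complex.I * y) = 0) ∧
      -- case (iii): `ε_f = 1`, `k ≡ 2 (mod 4)`
      ((-1 : ℝ) ^ n₀ * Real.sign (c 0 * c n₀) = 1 ∧ k % 4 = 2 →
        ∃ y : ℝ, 0 < y ∧ deriv f ((1/2 : ℂ) + Complex.I * y) = 0) ∧
      -- case (iv): `ε'_f = -1`, `k ≡ 0 (mod 4)`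
      (Real.sign (c 0 * c n₀) = -1 ∧ k % 4 = 0 →
        ∃ y : ℝ, 0 < y ∧ deriv f (Complex.I * y) = 0) ∧
      -- case (v): `ε'_f = 1`, `k ≡ 2 (mod 4)`
      (Real.sign (c 0 * c n₀) = 1 ∧ k % 4 = 2 →
        ∃ y : ℝ, 0 < y ∧ deriv f (Complex.I * y) = 0))) :=
  stmt12_general k f c hf
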